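/- Hypercontractivity for multilinear polynomials. Let n ≥ d ≥ 1 be integers and let P(x_1,…,x_n) = Σ_{S ⊆ {1,…,n}, |S| = d} a_S Π_{i∈S} x_i be a homogeneous multilinear polynomial of degree d with real coefficients. Let X_1,…,X_n be i.i.d. real random variables with E[X_1] = 0, E[X_1²] = 1 and E[X_1⁴] < ∞. Then E[P(X_1,…,X_n)⁴] ≤ (3 + 2·E[X_1⁴])^{2d} · (E[P(X_1,…,X_n)²])². -/

import Mathlib

/-!
Induction on the set of variables. For `j ∉ s`, a form of degree `d + 1` on `insert j s` splits
as `P = X_j Q + R`, where `Q` and `R` are forms on `s` of degrees `d` and `d + 1`, so `(Q, R)` is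
independent of `X_j`. As `E X_j = 0` and `E X_j² = 1`, the binomial expansion gives
`E P² = E Q² + E R²` and `E P⁴ = m E Q⁴ + 4 E X_j³ E Q³R + 6 E Q²R² + E R⁴` with `m = E X_j⁴ ≥ 1`.
AM-GM gives `|E X_j³| ≤ (1 + m)/2` and `|E Q³R| ≤ (E Q⁴ + E Q²R²)/2`, Cauchy–Schwarz gives
`E Q²R² ≤ (E Q⁴ E R⁴)^{1/2}`, and the induction hypotheses for `Q` and `R` (with constants
`B^{2d}` and `B^{2d+2}`, `B = 3 + 2m`) then give `E P⁴ ≤ B^{2d+2} (E Q² + E R²)²`.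
-/

open MeasureTheory ProbabilityTheory Finset

lemma abs_pow_mul_pow_le_one_add (x y : ℝ) {a b : ℕ} (hab : a + b ≤ 4) :
    |x ^ a * y ^ b| ≤ 1 + x ^ 4 + y ^ 4 := by
  set M := max |x| |y|
  have hM : 0 ≤ M := (abs_nonneg x).trans (le_max_left _ _)
  have hxy : |x ^ a * y ^ b| ≤ M ^ (a + b) := by
    rw [abs_mul, abs_pow, abs_pow, pow_add]
    gcongr
    exacts [le_max_left _ _, le_max_right _ _]
  have hM4 : M ^ 4 ≤ x ^ 4 + y ^ 4 := by
    have hx4 : |x| ^ 4 = x ^ 4 := Even.pow_abs (by decide) x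
    have hy4 : |y| ^ 4 = y ^ 4 := Even.pow_abs (by decide) y
    rcases max_cases |x| |y| with ⟨h, -⟩ | ⟨h, -⟩ <;> simp only [M, h, hx4, hy4]
    · nlinarith [pow_two_nonneg (y ^ 2)]
    · nlinarith [pow_two_nonneg (x ^ 2)]
  rcases le_total M 1 with h | h
  · linarith [pow_le_one₀ hM h (n := a + b), pow_two_nonneg (x ^ 2), pow_two_nonneg (y ^ 2)]
  · linarith [pow_le_pow_right₀ h hab]

section Integrals

variable {α : Type*} {mα : MeasurableSpace α} {μ : Measure α}

lemma integrable_pow_mul_pow_of_integrable_pow_four [IsFiniteMeasure μ] {f g : α → ℝ}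
    (hf : AEStronglyMeasurable f μ) (hg : AEStronglyMeasurable g μ)
    (hf4 : Integrable (fun x => f x ^ 4) μ) (hg4 : Integrable (fun x => g x ^ 4) μ)
    {a b : ℕ} (hab : a + b ≤ 4) :
    Integrable (fun x => f x ^ a * g x ^ b) μ :=
  (((integrable_const 1).add hf4).add hg4).mono' ((hf.pow a).mul (hg.pow b))
    (ae_of_all _ fun x => abs_pow_mul_pow_le_one_add (f x) (g x) hab)

lemma integrable_pow_of_integrable_pow_four [IsFiniteMeasure μ] {f : α → ℝ}
    (hf : AEStronglyMeasurable f μ) (hf4 : Integrable (fun x => f x ^ 4) μ) {k : ℕ}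
    (hk : k ≤ 4) : Integrable (fun x => f x ^ k) μ := by
  simpa using integrable_pow_mul_pow_of_integrable_pow_four hf hf hf4 hf4 (b := 0) hk

lemma sq_integral_mul_le_integral_sq_mul_integral_sq {f g : α → ℝ}
    (hf : Integrable (fun x => f x ^ 2) μ) (hg : Integrable (fun x => g x ^ 2) μ)
    (hfg : Integrable (fun x => f x * g x) μ) :
    (∫ x, f x * g x ∂μ) ^ 2 ≤ (∫ x, f x ^ 2 ∂μ) * ∫ x, g x ^ 2 ∂μ := by
  have hquad : ∀ t : ℝ, 0 ≤ (∫ x, f x ^ 2 ∂μ) * (t * t) + (2 * ∫ x, f x * g x ∂μ) * t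
      + ∫ x, g x ^ 2 ∂μ := by
    intro t
    have hsq : (fun x => (t * f x + g x) ^ 2)
        = fun x => t ^ 2 * f x ^ 2 + 2 * t * (f x * g x) + g x ^ 2 :=
      funext fun x => by ring
    have hexp : ∫ x, (t * f x + g x) ^ 2 ∂μ = (∫ x, f x ^ 2 ∂μ) * (t * t)
        + (2 * ∫ x, f x * g x ∂μ) * t + ∫ x, g x ^ 2 ∂μ := by
      rw [hsq, integral_add, integral_add, integral_const_mul, integral_const_mul]
      · ring
      exacts [hf.const_mul _, hfg.const_mul _, (hf.const_mul _).add (hfg.const_mul _), hg]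
    rw [← hexp]
    exact integral_nonneg fun x => sq_nonneg _
  have := discrim_le_zero hquad
  rw [discrim] at this
  nlinarith

lemma abs_integral_le_half_add {f g h : α → ℝ} (hg : Integrable g μ) (hh : Integrable h μ)
    (hfgh : ∀ x, |f x| ≤ (g x + h x) / 2) :
    |∫ x, f x ∂μ| ≤ ((∫ x, g x ∂μ) + ∫ x, h x ∂μ) / 2 := by
  rw [← integral_add hg hh, ← integral_div]
  exact norm_integral_le_of_norm_le (g := fun x => (g x + h x) / 2) ((hg.add hh).div_const 2)
    (ae_of_all _ fun x => (Real.norm_eq_abs _).trans_le (hfgh x))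

lemma sq_integral_sq_le_integral_pow_four [IsProbabilityMeasure μ] {f : α → ℝ}
    (hf : AEStronglyMeasurable f μ) (hf4 : Integrable (fun x => f x ^ 4) μ) :
    (∫ x, f x ^ 2 ∂μ) ^ 2 ≤ ∫ x, f x ^ 4 ∂μ := by
  have hf2 := integrable_pow_of_integrable_pow_four hf hf4 (k := 2) (by norm_num)
  have h := sq_integral_mul_le_integral_sq_mul_integral_sq (f := fun x => f x ^ 2)
    (g := fun _ => (1 : ℝ)) (μ := μ) (by simpa [← pow_mul] using hf4) (integrable_const _)
    (by simpa using hf2)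
  simpa [← pow_mul] using h

end Integrals

lemma ProbabilityTheory.iIndepFun.indepFun_of_notMem_of_dependsOn {Ω ι β γ : Type*}
    {mΩ : MeasurableSpace Ω} {μ : Measure Ω} [MeasurableSpace β] [Inhabited β]
    [MeasurableSpace γ] {X : ι → Ω → β} (hX : iIndepFun X μ) (hmeas : ∀ i, Measurable (X i))
    {s : Finset ι} {j : ι} (hj : j ∉ s) {F : (ι → β) → γ} (hF : Measurable F)
    (hFs : DependsOn F s) :
    IndepFun (X j) (fun ω => F (fun i => X i ω)) μ := by
  classical
  let extend : (s → β) → ι → β := fun w i => if h : i ∈ s then w ⟨i, h⟩ else default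
  have hextend : Measurable extend := by
    refine measurable_pi_lambda _ fun i => ?_
    by_cases h : i ∈ s
    · simpa [extend, h] using measurable_pi_apply (⟨i, h⟩ : s)
    · simp [extend, h]
  have hpair := (hX.indepFun_finset {j} s (disjoint_singleton_left.mpr hj) hmeas).comp
    (measurable_pi_apply (⟨j, mem_singleton_self j⟩ : ({j} : Finset ι))) (hF.comp hextend)
  refine hpair.congr (ae_of_all _ fun _ => rfl) (ae_of_all _ fun ω => hFs fun i hi => ?_)
  simp [extend, mem_coe.mp hi]

section HomogeneousMultilinear

variable {ι R : Type*} [CommSemiring R]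

def homogeneousMultilinear (s : Finset ι) (d : ℕ) (a : Finset ι → R) (x : ι → R) : R :=
  ∑ T ∈ s.powersetCard d, a T * ∏ i ∈ T, x i

@[simp]
lemma homogeneousMultilinear_zero (s : Finset ι) (a : Finset ι → R) (x : ι → R) :
    homogeneousMultilinear s 0 a x = a ∅ := by
  simp [homogeneousMultilinear]

@[simp]
lemma homogeneousMultilinear_empty_succ (d : ℕ) (a : Finset ι → R) (x : ι → R) :
    homogeneousMultilinear ∅ (d + 1) a x = 0 := by
  rw [homogeneousMultilinear, powersetCard_eq_empty.mpr (by simp), sum_empty]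

lemma homogeneousMultilinear_insert_succ [DecidableEq ι] {s : Finset ι} {j : ι} (hj : j ∉ s)
    (d : ℕ) (a : Finset ι → R) (x : ι → R) :
    homogeneousMultilinear (insert j s) (d + 1) a x =
      x j * homogeneousMultilinear s d (fun T => a (insert j T)) x +
        homogeneousMultilinear s (d + 1) a x := by
  have hjT : ∀ T ∈ s.powersetCard d, j ∉ T := fun T hT hjT =>
    hj ((mem_powersetCard.mp hT).1 hjT)
  have hdisj : Disjoint (s.powersetCard (d + 1)) ((s.powersetCard d).image (insert j)) :=
    disjoint_left.mpr fun T hT hT' => by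
      obtain ⟨T', -, rfl⟩ := mem_image.mp hT'
      exact hj ((mem_powersetCard.mp hT).1 (mem_insert_self j T'))
  rw [homogeneousMultilinear, powersetCard_succ_insert hj, sum_union hdisj, add_comm,
    sum_image fun T hT T' hT' h => by
      rw [← erase_insert (hjT T hT), ← erase_insert (hjT T' hT'), h],
    homogeneousMultilinear, homogeneousMultilinear, mul_sum]
  congr 1
  exact sum_congr rfl fun T hT => by rw [prod_insert (hjT T hT)]; ring

lemma dependsOn_homogeneousMultilinear (s : Finset ι) (d : ℕ) (a : Finset ι → R) :
    DependsOn (homogeneousMultilinear s d a) s := fun _ _ hxy =>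
  sum_congr rfl fun _ hT => congrArg _ <| prod_congr rfl fun i hi =>
    hxy i ((mem_powersetCard.mp hT).1 hi)

lemma measurable_homogeneousMultilinear (s : Finset ι) (d : ℕ) (a : Finset ι → ℝ) :
    Measurable (homogeneousMultilinear s d a) := by
  unfold homogeneousMultilinear
  fun_prop

end HomogeneousMultilinear

lemma mul_add_pow_eq_sum {R : Type*} [CommSemiring R] (y q r : R) (n : ℕ) :
    (y * q + r) ^ n = ∑ k ∈ range (n + 1), y ^ k * (q ^ k * r ^ (n - k)) * n.choose k := by
  rw [add_pow]
  exact sum_congr rfl fun k _ => by ring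

namespace ProbabilityTheory.IndepFun

variable {Ω : Type*} {mΩ : MeasurableSpace Ω} {μ : Measure Ω} {Y Q R : Ω → ℝ}

lemma integrable_pow_mul_pow_mul_pow (h : IndepFun Y (fun ω => (Q ω, R ω)) μ) {k l m : ℕ}
    (hY : Integrable (fun ω => Y ω ^ k) μ) (hQR : Integrable (fun ω => Q ω ^ l * R ω ^ m) μ) :
    Integrable (fun ω => Y ω ^ k * (Q ω ^ l * R ω ^ m)) μ :=
  (h.comp (measurable_id.pow_const k) (by fun_prop : Measurable fun p : ℝ × ℝ =>
    p.1 ^ l * p.2 ^ m)).integrable_mul hY hQR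

lemma integral_pow_mul_pow_mul_pow (h : IndepFun Y (fun ω => (Q ω, R ω)) μ)
    (hY : AEMeasurable Y μ) (hQR : AEMeasurable (fun ω => (Q ω, R ω)) μ) (k l m : ℕ) :
    ∫ ω, Y ω ^ k * (Q ω ^ l * R ω ^ m) ∂μ =
      (∫ ω, Y ω ^ k ∂μ) * ∫ ω, Q ω ^ l * R ω ^ m ∂μ :=
  h.integral_fun_comp_mul_comp (f := fun y => y ^ k) (g := fun p => p.1 ^ l * p.2 ^ m) hY hQR
    (by fun_prop) (Continuous.aestronglyMeasurable (by fun_prop))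

lemma integrable_mul_add_pow {n : ℕ} (h : IndepFun Y (fun ω => (Q ω, R ω)) μ)
    (hYint : ∀ k ≤ n, Integrable (fun ω => Y ω ^ k) μ)
    (hQRint : ∀ k ≤ n, Integrable (fun ω => Q ω ^ k * R ω ^ (n - k)) μ) :
    Integrable (fun ω => (Y ω * Q ω + R ω) ^ n) μ := by
  simp only [mul_add_pow_eq_sum]
  exact integrable_finsetSum _ fun k hk => (h.integrable_pow_mul_pow_mul_pow
    (hYint k (Nat.lt_succ_iff.mp (mem_range.mp hk)))
    (hQRint k (Nat.lt_succ_iff.mp (mem_range.mp hk)))).mul_const _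

lemma integral_mul_add_pow {n : ℕ} (h : IndepFun Y (fun ω => (Q ω, R ω)) μ)
    (hYint : ∀ k ≤ n, Integrable (fun ω => Y ω ^ k) μ)
    (hQRint : ∀ k ≤ n, Integrable (fun ω => Q ω ^ k * R ω ^ (n - k)) μ)
    (hY : AEMeasurable Y μ) (hQR : AEMeasurable (fun ω => (Q ω, R ω)) μ) :
    ∫ ω, (Y ω * Q ω + R ω) ^ n ∂μ = ∑ k ∈ range (n + 1),
      (∫ ω, Y ω ^ k ∂μ) * (∫ ω, Q ω ^ k * R ω ^ (n - k) ∂μ) * n.choose k := by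
  simp only [mul_add_pow_eq_sum]
  rw [integral_finsetSum _ fun k hk => (h.integrable_pow_mul_pow_mul_pow
    (hYint k (Nat.lt_succ_iff.mp (mem_range.mp hk)))
    (hQRint k (Nat.lt_succ_iff.mp (mem_range.mp hk)))).mul_const _]
  exact sum_congr rfl fun k _ => by
    rw [integral_mul_const, h.integral_pow_mul_pow_mul_pow hY hQR]

end ProbabilityTheory.IndepFun

lemma fourth_moment_step_le {m m₃ q₂ r₂ q₄ r₄ c c₃₁ K : ℝ} (hm : 1 ≤ m)
    (hm₃ : |m₃| ≤ (1 + m) / 2) (hc₃₁ : |c₃₁| ≤ (q₄ + c) / 2) (hc : c ^ 2 ≤ q₄ * r₄)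
    (hc₀ : 0 ≤ c) (hq₄ : 0 ≤ q₄) (hr₄ : 0 ≤ r₄) (hq₂ : 0 ≤ q₂) (hr₂ : 0 ≤ r₂) (hK : 0 ≤ K)
    (hQ : q₄ ≤ K * q₂ ^ 2) (hR : r₄ ≤ (3 + 2 * m) ^ 2 * K * r₂ ^ 2) :
    m * q₄ + 4 * (m₃ * c₃₁) + 6 * c + r₄ ≤ (3 + 2 * m) ^ 2 * K * (q₂ + r₂) ^ 2 := by
  set B := 3 + 2 * m
  have hB : 0 ≤ B := by positivity
  have hcK : c ≤ B * K * (q₂ * r₂) := by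
    have hprod : q₄ * r₄ ≤ (B * K * (q₂ * r₂)) ^ 2 := by
      calc q₄ * r₄ ≤ (K * q₂ ^ 2) * (B ^ 2 * K * r₂ ^ 2) := mul_le_mul hQ hR hr₄ (by positivity)
        _ = (B * K * (q₂ * r₂)) ^ 2 := by ring
    exact (abs_le_of_sq_le_sq' (hc.trans hprod) (by positivity)).2
  have hcross : 4 * (m₃ * c₃₁) ≤ (1 + m) * (q₄ + c) := by
    have := mul_le_mul hm₃ hc₃₁ (abs_nonneg _) (by linarith)
    rw [← abs_mul] at this
    linarith [le_abs_self (m₃ * c₃₁)]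
  have hq : (1 + 2 * m) * q₄ ≤ B ^ 2 * (K * q₂ ^ 2) :=
    mul_le_mul (by nlinarith) hQ hq₄ (by positivity)
  have hc' : (7 + m) * c ≤ 2 * B * (B * K * (q₂ * r₂)) :=
    mul_le_mul (by linarith) hcK hc₀ (by positivity)
  nlinarith

section Hypercontractivity

variable {Ω : Type*} {mΩ : MeasurableSpace Ω} {μ : Measure Ω} [IsProbabilityMeasure μ]

lemma integrable_and_integral_mul_add_pow_four_le {Y Q R : Ω → ℝ} (hY : AEMeasurable Y μ)
    (hQ : AEMeasurable Q μ) (hR : AEMeasurable R μ) (hindep : IndepFun Y (fun ω => (Q ω, R ω)) μ)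
    (hmean : ∫ ω, Y ω ∂μ = 0) (hvar : ∫ ω, Y ω ^ 2 ∂μ = 1)
    (hY4 : Integrable (fun ω => Y ω ^ 4) μ) (hQ4 : Integrable (fun ω => Q ω ^ 4) μ)
    (hR4 : Integrable (fun ω => R ω ^ 4) μ) {K : ℝ} (hK : 0 ≤ K)
    (hQK : ∫ ω, Q ω ^ 4 ∂μ ≤ K * (∫ ω, Q ω ^ 2 ∂μ) ^ 2)
    (hRK : ∫ ω, R ω ^ 4 ∂μ ≤ (3 + 2 * ∫ ω, Y ω ^ 4 ∂μ) ^ 2 * K * (∫ ω, R ω ^ 2 ∂μ) ^ 2) :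
    Integrable (fun ω => (Y ω * Q ω + R ω) ^ 4) μ ∧
      ∫ ω, (Y ω * Q ω + R ω) ^ 4 ∂μ ≤
        (3 + 2 * ∫ ω, Y ω ^ 4 ∂μ) ^ 2 * K * (∫ ω, (Y ω * Q ω + R ω) ^ 2 ∂μ) ^ 2 := by
  have hYk : ∀ k ≤ 4, Integrable (fun ω => Y ω ^ k) μ := fun k hk =>
    integrable_pow_of_integrable_pow_four hY.aestronglyMeasurable hY4 hk
  have hQR : ∀ {k l : ℕ}, k + l ≤ 4 → Integrable (fun ω => Q ω ^ k * R ω ^ l) μ := fun hkl =>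
    integrable_pow_mul_pow_of_integrable_pow_four hQ.aestronglyMeasurable
      hR.aestronglyMeasurable hQ4 hR4 hkl
  refine ⟨hindep.integrable_mul_add_pow (fun k hk => hYk k hk) fun k hk => hQR (by omega), ?_⟩
  have h4 : ∫ ω, (Y ω * Q ω + R ω) ^ 4 ∂μ = (∫ ω, Y ω ^ 4 ∂μ) * (∫ ω, Q ω ^ 4 ∂μ)
      + 4 * ((∫ ω, Y ω ^ 3 ∂μ) * ∫ ω, Q ω ^ 3 * R ω ∂μ) + 6 * (∫ ω, Q ω ^ 2 * R ω ^ 2 ∂μ)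
      + ∫ ω, R ω ^ 4 ∂μ := by
    rw [hindep.integral_mul_add_pow (fun k hk => hYk k hk) (fun k hk => hQR (by omega)) hY
      (hQ.prodMk hR)]
    simp only [sum_range_succ, sum_range_zero, Nat.choose, Nat.reduceAdd, Nat.reduceSub,
      pow_zero, pow_one, one_mul, mul_one, integral_const, probReal_univ, one_smul, hmean, hvar]
    ring
  have h2 : ∫ ω, (Y ω * Q ω + R ω) ^ 2 ∂μ = (∫ ω, Q ω ^ 2 ∂μ) + ∫ ω, R ω ^ 2 ∂μ := by
    rw [hindep.integral_mul_add_pow (fun k hk => hYk k (by omega)) (fun k hk => hQR (by omega))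
      hY (hQ.prodMk hR)]
    simp only [sum_range_succ, sum_range_zero, Nat.choose, Nat.reduceAdd, Nat.reduceSub,
      pow_zero, pow_one, one_mul, mul_one, integral_const, probReal_univ, one_smul, hmean, hvar]
    ring
  have hm₃ : |∫ ω, Y ω ^ 3 ∂μ| ≤ (1 + ∫ ω, Y ω ^ 4 ∂μ) / 2 := by
    rw [← hvar]
    refine abs_integral_le_half_add (hYk 2 (by norm_num)) hY4 fun ω => ?_
    rw [abs_pow, ← sq_abs (Y ω), ← Even.pow_abs (by decide : Even 4)]
    nlinarith [sq_nonneg (|Y ω| ^ 2 - |Y ω|), abs_nonneg (Y ω)]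
  have hc₃₁ : |∫ ω, Q ω ^ 3 * R ω ∂μ| ≤
      ((∫ ω, Q ω ^ 4 ∂μ) + ∫ ω, Q ω ^ 2 * R ω ^ 2 ∂μ) / 2 :=
    abs_integral_le_half_add hQ4 (hQR (by norm_num)) fun ω => abs_le.mpr
      ⟨by nlinarith [mul_nonneg (sq_nonneg (Q ω)) (sq_nonneg (Q ω + R ω))],
        by nlinarith [mul_nonneg (sq_nonneg (Q ω)) (sq_nonneg (Q ω - R ω))]⟩
  have hc : (∫ ω, Q ω ^ 2 * R ω ^ 2 ∂μ) ^ 2 ≤ (∫ ω, Q ω ^ 4 ∂μ) * ∫ ω, R ω ^ 4 ∂μ := by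
    simpa [← pow_mul] using sq_integral_mul_le_integral_sq_mul_integral_sq
      (f := fun ω => Q ω ^ 2) (g := fun ω => R ω ^ 2) (by simpa [← pow_mul] using hQ4)
      (by simpa [← pow_mul] using hR4) (hQR (by norm_num))
  have hm : 1 ≤ ∫ ω, Y ω ^ 4 ∂μ := by
    simpa [hvar] using sq_integral_sq_le_integral_pow_four hY.aestronglyMeasurable hY4
  rw [h4, h2]
  linarith [fourth_moment_step_le hm hm₃ hc₃₁ hc (integral_nonneg fun ω => by positivity)
    (integral_nonneg fun ω => by positivity) (integral_nonneg fun ω => by positivity)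
    (integral_nonneg fun ω => by positivity) (integral_nonneg fun ω => by positivity) hK hQK hRK]

theorem integrable_and_integral_homogeneousMultilinear_pow_four_le {ι : Type*} [DecidableEq ι]
    {X : ι → Ω → ℝ} (hmeas : ∀ i, Measurable (X i)) (hindep : iIndepFun X μ)
    (hmean : ∀ i, ∫ ω, X i ω ∂μ = 0) (hvar : ∀ i, ∫ ω, X i ω ^ 2 ∂μ = 1)
    (hfourth : ∀ i, Integrable (fun ω => X i ω ^ 4) μ) {m : ℝ}
    (hm : ∀ i, ∫ ω, X i ω ^ 4 ∂μ = m) (s : Finset ι) (d : ℕ) (a : Finset ι → ℝ) :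
    Integrable (fun ω => homogeneousMultilinear s d a (X · ω) ^ 4) μ ∧
      ∫ ω, homogeneousMultilinear s d a (X · ω) ^ 4 ∂μ ≤
        (3 + 2 * m) ^ (2 * d) * (∫ ω, homogeneousMultilinear s d a (X · ω) ^ 2 ∂μ) ^ 2 := by
  have hXm : Measurable fun ω (i : ι) => X i ω := measurable_pi_lambda _ hmeas
  induction s using Finset.induction_on generalizing d a with
  | empty =>
    cases d with
    | zero => simp [← pow_mul]
    | succ e => simp
  | insert j s hj ih =>
    cases d with
    | zero => simp [← pow_mul]
    | succ e =>
      simp only [homogeneousMultilinear_insert_succ hj]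
      obtain ⟨hQ4, hQK⟩ := ih e (fun T => a (insert j T))
      obtain ⟨hR4, hRK⟩ := ih (e + 1) a
      have hind := hindep.indepFun_of_notMem_of_dependsOn hmeas hj
        (F := fun x => (homogeneousMultilinear s e (fun T => a (insert j T)) x,
          homogeneousMultilinear s (e + 1) a x))
        ((measurable_homogeneousMultilinear _ _ _).prodMk (measurable_homogeneousMultilinear _ _ _))
        fun x y hxy => Prod.ext (dependsOn_homogeneousMultilinear _ _ _ hxy)
          (dependsOn_homogeneousMultilinear _ _ _ hxy)
      have hpow : (3 + 2 * m) ^ (2 * (e + 1)) = (3 + 2 * m) ^ 2 * (3 + 2 * m) ^ (2 * e) := by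
        ring
      rw [hpow] at hRK ⊢
      rw [← hm j] at hQK hRK ⊢
      exact integrable_and_integral_mul_add_pow_four_le (hmeas j).aemeasurable
        ((measurable_homogeneousMultilinear _ _ _).comp hXm).aemeasurable
        ((measurable_homogeneousMultilinear _ _ _).comp hXm).aemeasurable hind
        (hmean j) (hvar j) (hfourth j) hQ4 hR4 (by positivity) hQK hRK

end Hypercontractivity

theorem multilinear_hypercontractivity
    {Ω : Type*} [MeasureSpace Ω] [IsProbabilityMeasure (ℙ : Measure Ω)]
    (n d : ℕ) (hd : 1 ≤ d) (hdn : d ≤ n)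
    (a : Finset (Fin n) → ℝ)
    (X : Fin n → Ω → ℝ) (hmeas : ∀ i, Measurable (X i))
    (hindep : iIndepFun X ℙ)
    (hident : ∀ i j, Measure.map (X i) ℙ = Measure.map (X j) ℙ)
    (hmean : ∀ i, ∫ ω, X i ω = 0)
    (hvar : ∀ i, ∫ ω, (X i ω) ^ 2 = 1)
    (hfourth : ∀ i, Integrable (fun ω => (X i ω) ^ 4)) :
    (∫ ω, (∑ S ∈ Finset.univ.powersetCard d, a S * ∏ i ∈ S, X i ω) ^ 4) ≤
      (3 + 2 * ∫ ω, (X ⟨0, by omega⟩ ω) ^ 4) ^ (2 * d) *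
        (∫ ω, (∑ S ∈ Finset.univ.powersetCard d, a S * ∏ i ∈ S, X i ω) ^ 2) ^ 2 := by
  have hm : ∀ i, ∫ ω, X i ω ^ 4 = ∫ ω, X ⟨0, by omega⟩ ω ^ 4 := fun i =>
    (IdentDistrib.comp ⟨(hmeas i).aemeasurable, (hmeas _).aemeasurable, hident _ _⟩
      (measurable_id.pow_const 4)).integral_eq
  exact (integrable_and_integral_homogeneousMultilinear_pow_four_le hmeas hindep hmean hvar
    hfourth hm univ d a).2
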